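/- Let N ≥ 2, let Ω ⊆ ℂ^N be an open set, and let u : Ω → ℝ be a C² function such that at every point z ∈ Ω the complex Hessian H_u(z) has trace zero and the second elementary symmetric polynomial of its eigenvalues is nonnegative. Then H_u(z) = 0 for every z ∈ Ω; in particular, all eigenvalues of H_u(z) vanish identically, i.e. u is pluriharmonic. (C² version of Proposition 3.4: for k ≥ 2, a function that is k-pluriharmonic is pluriharmonic.) -/

import Mathlib

/-!
The hypotheses are pointwise and purely linear-algebraic. If `λ` is the eigenvalue vector of
the Hermitian matrix `H_u(z)`, then `∑ λᵢ = tr H_u(z) = 0`, so Newton's identity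
`∑ λᵢ² = (∑ λᵢ)² - 2 e₂(λ) = -2 e₂(λ) ≤ 0` forces `λ = 0`, and a Hermitian matrix with
vanishing spectrum is zero.
-/

/-- The complex Hessian matrix of `u : ℂ^N → ℝ` at `z`, with entries
`(∂²u/∂z_j∂z̄_k)(z)` expressed through the second real Fréchet derivative. -/
noncomputable def complexHessian {m : ℕ} (φ : (Fin m → ℂ) → ℝ) (w : Fin m → ℂ) :
    Matrix (Fin m) (Fin m) ℂ :=
  Matrix.of fun j k =>
    (((1 / 4 : ℝ) * (fderiv ℝ (fderiv ℝ φ) w (Pi.single j 1) (Pi.single k 1)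
        + fderiv ℝ (fderiv ℝ φ) w (Pi.single j Complex.I) (Pi.single k Complex.I)) : ℝ) : ℂ)
    + Complex.I * (((1 / 4 : ℝ) *
        (fderiv ℝ (fderiv ℝ φ) w (Pi.single j 1) (Pi.single k Complex.I)
        - fderiv ℝ (fderiv ℝ φ) w (Pi.single j Complex.I) (Pi.single k 1)) : ℝ) : ℂ)

/-- The `l`-th elementary symmetric polynomial of `x ∈ ℝ^N`. -/
def esymm {N : ℕ} (l : ℕ) (x : Fin N → ℝ) : ℝ :=
  ∑ s ∈ Finset.powersetCard l (Finset.univ : Finset (Fin N)), ∏ j ∈ s, x j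

open Finset MvPolynomial in
theorem Finset.sum_sq_eq_sum_sq_add_two_mul_sum_powersetCard_two {σ R : Type*} [Fintype σ]
    [CommRing R] (x : σ → R) :
    (∑ i, x i) ^ 2 = ∑ i, x i ^ 2 + 2 * ∑ t ∈ powersetCard 2 univ, ∏ j ∈ t, x j := by
  have newton := congrArg (aeval x) (psum_eq_mul_esymm_sub_sum σ ℤ 2 two_pos)
  have middle_terms : {a ∈ antidiagonal 2 | a.1 ∈ Set.Ioo 0 2} = {(1, 1)} := by decide
  simp only [middle_terms, psum, aeval_esymm_eq_multiset_esymm, esymm_map_val, sum_singleton,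
    map_sub, map_mul, map_pow, map_neg, map_one, map_sum, aeval_X,
    powersetCard_one, sum_map, Function.Embedding.coeFn_mk, prod_singleton, pow_one,
    Nat.cast_ofNat, map_ofNat] at newton
  linear_combination -newton

theorem eq_zero_of_sum_eq_zero_of_esymm_two_nonneg {N : ℕ} {x : Fin N → ℝ}
    (hsum : ∑ i, x i = 0) (he : 0 ≤ esymm 2 x) : x = 0 := by
  have hsq : ∑ i, x i ^ 2 = -2 * esymm 2 x := by
    unfold esymm
    linear_combination (Finset.sum_sq_eq_sum_sq_add_two_mul_sum_powersetCard_two x).symm +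
      (∑ i, x i) * hsum
  have hsq_zero : ∑ i, x i ^ 2 = 0 :=
    le_antisymm (by linarith) (Finset.sum_nonneg fun i _ => sq_nonneg (x i))
  funext i
  exact pow_eq_zero_iff two_ne_zero |>.mp <|
    (Finset.sum_eq_zero_iff_of_nonneg fun i _ => sq_nonneg (x i)).mp hsq_zero i (Finset.mem_univ i)

theorem Matrix.IsHermitian.eq_zero_of_trace_eq_zero_of_esymm_two_nonneg {𝕜 : Type*} [RCLike 𝕜]
    {N : ℕ} {A : Matrix (Fin N) (Fin N) 𝕜} (hA : A.IsHermitian) (htr : A.trace = 0)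
    (he : 0 ≤ esymm 2 hA.eigenvalues) : A = 0 := by
  have hsum : ∑ i, hA.eigenvalues i = 0 := by
    exact_mod_cast hA.trace_eq_sum_eigenvalues.symm.trans htr
  exact hA.eigenvalues_eq_zero_iff.mp (eq_zero_of_sum_eq_zero_of_esymm_two_nonneg hsum he)

theorem kPluriharmonic_is_pluriharmonic_general (N : ℕ)
    (Ω : Set (Fin N → ℂ))
    (u : (Fin N → ℂ) → ℝ)
    (hH : ∀ z ∈ Ω, ∃ h : (complexHessian u z).IsHermitian,
      (complexHessian u z).trace = 0 ∧ 0 ≤ esymm 2 h.eigenvalues) :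
    ∀ z ∈ Ω, complexHessian u z = 0 := by
  intro z hz
  obtain ⟨hHerm, htr, he⟩ := hH z hz
  exact hHerm.eq_zero_of_trace_eq_zero_of_esymm_two_nonneg htr he

/-- C² version of Proposition 3.4: if the complex Hessian of `u` has trace zero and
its eigenvalue vector has nonnegative second elementary symmetric polynomial at every
point, then the complex Hessian vanishes identically, i.e. `u` is pluriharmonic. -/
theorem kPluriharmonic_is_pluriharmonic (N : ℕ) (hN : 2 ≤ N)
    (Ω : Set (Fin N → ℂ)) (hΩ : IsOpen Ω)
    (u : (Fin N → ℂ) → ℝ) (hu : ContDiffOn ℝ 2 u Ω)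
    (hH : ∀ z ∈ Ω, ∃ h : (complexHessian u z).IsHermitian,
      (complexHessian u z).trace = 0 ∧ 0 ≤ esymm 2 h.eigenvalues) :
    ∀ z ∈ Ω, complexHessian u z = 0 :=
  kPluriharmonic_is_pluriharmonic_general N Ω u hH
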